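/- With λ^TF = (2(s+2)/(π s))^{s/(s+2)}, the function ρ^TF(r) = (1/2)[λ^TF − r^s]_+ satisfies ∫_{ℝ²} ρ^TF(|x|) dx = 1, and the Thomas-Fermi ground state energy equals E^TF = (π s / (4(s+1) ε²)) (λ^TF)^{2(s+1)/s}. -/

import Mathlib

open MeasureTheory Set Real

abbrev E2 := EuclideanSpace ℝ (Fin 2)

/-- `λ^TF = (2(s+2)/(π s))^{s/(s+2)}`. -/
noncomputable def lamTF (s : ℝ) : ℝ := (2 * (s + 2) / (π * s)) ^ (s / (s + 2))

/-- The Thomas-Fermi density profile `ρ^TF(r) = (1/2) max(λ^TF − r^s, 0)`. -/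
noncomputable def rhoTF (s : ℝ) (r : ℝ) : ℝ := (1 / 2) * max (lamTF s - r ^ s) 0

/-!
In polar coordinates both integrals reduce to `∫₀^∞ r [c - r^p]₊ dr = p / (2(p+2)) c^((p+2)/p)`.
For the energy, `(r^s + ρ^TF) ρ^TF = ¼ [λ² - r^(2s)]₊` is again of this form (with `p = 2s`), and
`λ^TF` is chosen so that `(λ^TF)^((s+2)/s) = 2(s+2)/(π s)`, which is exactly unit mass.
-/

theorem integral_fun_norm_euclideanSpace_two (f : ℝ → ℝ) :
    ∫ x : E2, f ‖x‖ = 2 * π * ∫ r in Ioi (0 : ℝ), r * f r := by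
  have hball : volume.real (Metric.ball (0 : E2) 1) = π := by
    rw [measureReal_def, EuclideanSpace.volume_ball]
    norm_num [Gamma_two, sq_sqrt pi_pos.le, ENNReal.toReal_ofReal pi_pos.le]
  rw [integral_fun_norm_addHaar volume f, finrank_euclideanSpace_fin, hball]
  simp only [nsmul_eq_mul, smul_eq_mul, Nat.cast_ofNat, Nat.add_one_sub_one, pow_one]
  ring

theorem setIntegral_Ioi_mul_max_sub_rpow_eq_intervalIntegral {c p : ℝ} (hc : 0 ≤ c)
    (hp : 0 < p) :
    ∫ r in Ioi (0 : ℝ), r * max (c - r ^ p) 0 = ∫ r in (0 : ℝ)..c ^ p⁻¹, r * (c - r ^ p) := by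
  have hcut : EqOn (fun r => r * max (c - r ^ p) 0)
      ((Ioc 0 (c ^ p⁻¹)).indicator fun r => r * (c - r ^ p)) (Ioi 0) := by
    intro r (hr : 0 < r)
    by_cases hrc : r ≤ c ^ p⁻¹
    · have hle : r ^ p ≤ c := (le_rpow_inv_iff_of_pos hr.le hc hp).1 hrc
      simp [indicator_of_mem (show r ∈ Ioc 0 (c ^ p⁻¹) from ⟨hr, hrc⟩), hle]
    · have hge : c ≤ r ^ p := ((rpow_inv_le_iff_of_pos hc hr.le hp).1 (not_le.1 hrc).le)
      simp [indicator_of_notMem (fun h : r ∈ Ioc _ _ => hrc h.2), hge]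
  rw [setIntegral_congr_fun measurableSet_Ioi hcut, setIntegral_indicator measurableSet_Ioc,
    inter_eq_self_of_subset_right Ioc_subset_Ioi_self,
    intervalIntegral.integral_of_le (by positivity)]

theorem intervalIntegral_mul_sub_rpow {c p R : ℝ} (hp : 0 < p) (hR : 0 ≤ R) :
    ∫ r in (0 : ℝ)..R, r * (c - r ^ p) = c * R ^ 2 / 2 - R ^ (p + 2) / (p + 2) := by
  have hexpand : EqOn (fun r => r * (c - r ^ p)) (fun r => c * r - r ^ (p + 1)) (uIcc 0 R) := by
    intro r hr
    rw [uIcc_of_le hR] at hr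
    simp only [rpow_add' hr.1 (by positivity : p + 1 ≠ 0), rpow_one]
    ring
  rw [intervalIntegral.integral_congr hexpand, intervalIntegral.integral_sub
      (intervalIntegral.intervalIntegrable_id.const_mul c)
      (intervalIntegral.intervalIntegrable_rpow' (by linarith)),
    intervalIntegral.integral_const_mul, integral_id, integral_rpow (Or.inl (by linarith)),
    zero_rpow (by positivity)]
  ring_nf

theorem integral_Ioi_mul_max_sub_rpow {c p : ℝ} (hc : 0 ≤ c) (hp : 0 < p) :
    ∫ r in Ioi (0 : ℝ), r * max (c - r ^ p) 0 = p / (2 * (p + 2)) * c ^ ((p + 2) / p) := by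
  have hsq : (c ^ p⁻¹) ^ 2 = c ^ (2 / p) := by
    rw [← rpow_natCast, ← rpow_mul hc]; ring_nf
  have hpow : (c ^ p⁻¹) ^ (p + 2) = c * c ^ (2 / p) := by
    rw [← rpow_mul hc, inv_mul_eq_div, add_div, div_self hp.ne', rpow_add' hc (by positivity),
      rpow_one]
  rw [setIntegral_Ioi_mul_max_sub_rpow_eq_intervalIntegral hc hp,
    intervalIntegral_mul_sub_rpow hp (by positivity), hsq, hpow, add_div, div_self hp.ne',
    rpow_add' hc (by positivity), rpow_one]
  field_simp
  ring

theorem lamTF_nonneg {s : ℝ} (hs : 0 < s) : 0 ≤ lamTF s := by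
  unfold lamTF; positivity

theorem lamTF_rpow_add_two_div {s : ℝ} (hs : 0 < s) :
    lamTF s ^ ((s + 2) / s) = 2 * (s + 2) / (π * s) := by
  rw [lamTF, ← rpow_mul (by positivity), div_mul_div_comm, mul_comm s, div_self (by positivity),
    rpow_one]

theorem add_half_max_sub_mul_half_max_sub {l t : ℝ} (hl : 0 ≤ l) (ht : 0 ≤ t) :
    (t + 1 / 2 * max (l - t) 0) * (1 / 2 * max (l - t) 0) = 1 / 4 * max (l ^ 2 - t ^ 2) 0 := by
  rcases le_total t l with h | h
  · rw [max_eq_left (by linarith), max_eq_left (by nlinarith)]; ring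
  · rw [max_eq_right (by linarith), max_eq_right (by nlinarith)]; ring

theorem tf_mass_and_energy_general (s ε : ℝ) (hs : 2 ≤ s) :
    (∫ x : E2, rhoTF s ‖x‖ = 1) ∧
    (1 / ε ^ 2) * ∫ x : E2, (‖x‖ ^ s + rhoTF s ‖x‖) * rhoTF s ‖x‖
      = (π * s / (4 * (s + 1) * ε ^ 2)) * (lamTF s) ^ (2 * (s + 1) / s) := by
  have hs0 : 0 < s := by linarith
  have hl := lamTF_nonneg hs0
  constructor
  · have hmass : ∀ r : ℝ, r * rhoTF s r = 1 / 2 * (r * max (lamTF s - r ^ s) 0) := fun r => by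
      rw [rhoTF]; ring
    rw [integral_fun_norm_euclideanSpace_two (rhoTF s), funext hmass, integral_const_mul,
      integral_Ioi_mul_max_sub_rpow hl hs0, lamTF_rpow_add_two_div hs0]
    field_simp
  · have hdensity : ∀ r : ℝ, 0 < r → r * ((r ^ s + rhoTF s r) * rhoTF s r)
        = 1 / 4 * (r * max (lamTF s ^ 2 - r ^ (2 * s)) 0) := fun r hr => by
      rw [rhoTF, add_half_max_sub_mul_half_max_sub hl (by positivity), mul_comm 2 s, rpow_mul hr.le,
        rpow_two]
      ring
    have hexp : (lamTF s ^ 2) ^ ((2 * s + 2) / (2 * s)) = lamTF s ^ (2 * (s + 1) / s) := by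
      rw [← rpow_two, ← rpow_mul hl]; congr 1; field_simp
    rw [integral_fun_norm_euclideanSpace_two fun r => (r ^ s + rhoTF s r) * rhoTF s r,
      setIntegral_congr_fun measurableSet_Ioi hdensity, integral_const_mul,
      integral_Ioi_mul_max_sub_rpow (by positivity) (by positivity), hexp]
    field_simp

/-- With `λ^TF = (2(s+2)/(πs))^{s/(s+2)}`, the TF profile has unit mass and the TF ground
state energy equals `(π s / (4(s+1)ε²)) (λ^TF)^{2(s+1)/s}`. -/
theorem tf_mass_and_energy (s ε : ℝ) (hs : 2 ≤ s) (hε : 0 < ε) :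
    (∫ x : E2, rhoTF s ‖x‖ = 1) ∧
    (1 / ε ^ 2) * ∫ x : E2, (‖x‖ ^ s + rhoTF s ‖x‖) * rhoTF s ‖x‖
      = (π * s / (4 * (s + 1) * ε ^ 2)) * (lamTF s) ^ (2 * (s + 1) / s) :=
  tf_mass_and_energy_general s ε hs
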